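/- The function f₁(γ) = ηγ/(δ(δ+γ)) − σ²/(η + √(η² + 2σ²(δ+γ))) is strictly increasing on (0,∞), satisfies lim_{γ↓0} f₁(γ) = 1/θ₋, and lim_{γ↑∞} f₁(γ) = η/δ. -/

import Mathlib

/-!
Since ηγ/(δ(δ+γ)) = η/δ − η/(δ+γ), f₁ is the constant η/δ minus two terms, η/(δ+γ) and
σ²/(η + √(η² + 2σ²(δ+γ))), each strictly decreasing in γ and tending to 0 as γ → ∞.
Moreover f₁ is continuous at 0, where its value −σ²/(η + √(η² + 2σ²δ)) is exactly 1/θ₋.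
-/

open Real Filter Set

/-- Negative root θ₋ of (σ²/2)r² + ηr − δ = 0. -/
noncomputable def thetaM (σ η δ : ℝ) : ℝ := (-η - Real.sqrt (η ^ 2 + 2 * σ ^ 2 * δ)) / σ ^ 2

/-- f₁(γ) = ηγ/(δ(δ+γ)) − σ²/(η + √(η² + 2σ²(δ+γ))). -/
noncomputable def f1 (σ η δ : ℝ) (γ : ℝ) : ℝ :=
  η * γ / (δ * (δ + γ)) - σ ^ 2 / (η + Real.sqrt (η ^ 2 + 2 * σ ^ 2 * (δ + γ)))

open Topology

lemma strictAntiOn_div_add_sqrt {c η : ℝ} (hc : 0 < c) (hη : 0 < η) :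
    StrictAntiOn (fun x => c / (η + √x)) (Ici 0) := by
  intro x hx y _ hxy
  have hsqrt : √x < √y := Real.sqrt_lt_sqrt hx hxy
  exact div_lt_div_of_pos_left hc (by positivity) (by linarith)

lemma tendsto_div_add_sqrt_atTop (c η : ℝ) :
    Tendsto (fun x => c / (η + √x)) atTop (𝓝 0) :=
  tendsto_const_nhds.div_atTop (tendsto_atTop_add_const_left _ _ Real.tendsto_sqrt_atTop)

lemma strictAntiOn_div_add {η : ℝ} (hη : 0 < η) (δ : ℝ) :
    StrictAntiOn (fun γ => η / (δ + γ)) (Ioi (-δ)) := by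
  intro x hx y _ hxy
  have hx' : 0 < δ + x := by simp only [mem_Ioi] at hx; linarith
  exact div_lt_div_of_pos_left hη hx' (by linarith)

lemma f1_eq_sub {σ η δ γ : ℝ} (hδ : δ ≠ 0) (hγ : δ + γ ≠ 0) :
    f1 σ η δ γ = η / δ - η / (δ + γ) - σ ^ 2 / (η + √(η ^ 2 + 2 * σ ^ 2 * (δ + γ))) := by
  rw [f1]
  congr 1
  field_simp
  ring

lemma f1_zero (σ η δ : ℝ) : f1 σ η δ 0 = 1 / thetaM σ η δ := by
  rw [f1, thetaM, one_div_div, add_zero, mul_zero, zero_div, zero_sub, ← div_neg, neg_add']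

lemma strictMonoOn_f1 {σ η δ : ℝ} (hσ : σ ≠ 0) (hη : 0 < η) (hδ : δ ≠ 0) :
    StrictMonoOn (f1 σ η δ) (Ioi (-δ)) := by
  intro x hx y hy hxy
  have hx' : 0 < δ + x := by simp only [mem_Ioi] at hx; linarith
  have hy' : 0 < δ + y := by simp only [mem_Ioi] at hy; linarith
  have hσ2 : 0 < σ ^ 2 := by positivity
  have hfrac : η / (δ + y) < η / (δ + x) := strictAntiOn_div_add hη δ hx hy hxy
  have hroot : σ ^ 2 / (η + √(η ^ 2 + 2 * σ ^ 2 * (δ + y))) <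
      σ ^ 2 / (η + √(η ^ 2 + 2 * σ ^ 2 * (δ + x))) :=
    strictAntiOn_div_add_sqrt hσ2 hη (mem_Ici.2 (by positivity)) (mem_Ici.2 (by positivity))
      (by gcongr)
  rw [f1_eq_sub hδ hx'.ne', f1_eq_sub hδ hy'.ne']
  linarith

lemma continuousAt_f1 {σ η δ γ : ℝ} (hη : 0 < η) (hγ : δ * (δ + γ) ≠ 0) :
    ContinuousAt (f1 σ η δ) γ := by
  have hden : η + √(η ^ 2 + 2 * σ ^ 2 * (δ + γ)) ≠ 0 := by positivity
  unfold f1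
  fun_prop (disch := assumption)

lemma tendsto_f1_atTop {σ η δ : ℝ} (hσ : σ ≠ 0) (hδ : δ ≠ 0) :
    Tendsto (f1 σ η δ) atTop (𝓝 (η / δ)) := by
  have hfrac : Tendsto (fun γ => η / (δ + γ)) atTop (𝓝 0) :=
    tendsto_const_nhds.div_atTop (tendsto_atTop_add_const_left _ _ tendsto_id)
  have harg : Tendsto (fun γ => η ^ 2 + 2 * σ ^ 2 * (δ + γ)) atTop atTop :=
    tendsto_atTop_add_const_left _ _
      ((tendsto_atTop_add_const_left _ _ tendsto_id).const_mul_atTop (by positivity))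
  have hroot := (tendsto_div_add_sqrt_atTop (σ ^ 2) η).comp harg
  have hsum := (tendsto_const_nhds (x := η / δ)).sub hfrac |>.sub hroot
  rw [sub_zero, sub_zero] at hsum
  refine hsum.congr' ?_
  filter_upwards [eventually_ne_atTop (-δ)] with γ hγ
  exact (f1_eq_sub hδ (by contrapose! hγ; linarith)).symm

theorem f1_strictMonoOn_and_limits (σ η δ : ℝ) (hσ : 0 < σ) (hη : 0 < η) (hδ : 0 < δ) :
    StrictMonoOn (f1 σ η δ) (Set.Ioi 0) ∧
    Tendsto (f1 σ η δ) (nhdsWithin 0 (Set.Ioi 0)) (nhds (1 / thetaM σ η δ)) ∧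
    Tendsto (f1 σ η δ) atTop (nhds (η / δ)) := by
  refine ⟨(strictMonoOn_f1 hσ.ne' hη hδ.ne').mono (Ioi_subset_Ioi (by linarith)), ?_,
    tendsto_f1_atTop hσ.ne' hδ.ne'⟩
  rw [← f1_zero]
  exact (continuousAt_f1 hη (by positivity)).tendsto.mono_left nhdsWithin_le_nhds
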